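/- (Axiomatization for OLF) Let f be a map assigning to every OLF system S (on an odd number of actors) a score function f_S : V → ℝ. Suppose f satisfies: (1) symmetry: for i, j in a system S with S(i) = S(j) and P(i) = P(j), f_S(i) = f_S(j); (2) dictator property: if S(i) = V \ {i} then f_S(i) = 2^n; (3) dictated independence: if |P_G(i)| = |P_{G'}(i)| = 1 for systems S, S' on the same vertex set, then f_S(i) = f_{S'}(i); (4) equal gain: if i is an opinion leader or independent actor of S, j a follower of S, and E(G') = E(G) ∪ {(i,j)}, then f_{S'}(i) - f_S(i) = f_{S'}(j) - f_S(j); (5) opposite gain: if i is an opinion leader or independent actor of S, j an independent actor of S, and E(G') = E(G) ∪ {(i,j)}, then f_{S'}(i) - f_S(i) = f_S(j) - f_{S'}(j); (6) horizontal neutrality: if i is an opinion leader or independent actor of S, j a follower of S, h an opinion leader of S with h ∈ P_G(j), and E(G') = E(G) ∪ {(i,j)}, then f_{S'}(i) - f_S(i) = f_S(h) - f_{S'}(h); (7) satisfaction normalization: Σ_{i∈V} f_S(i) = Σ_{x∈{0,1}^n} |{i ∈ V : C_S(x) = x_i}|. Then f_S(i) = SAT_S(i) for every OLF system S and every actor i.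 -/

import Mathlib

open Finset

/-- The set of predecessors of `i` in the digraph with edge set `E`. -/
def preds {n : ℕ} (E : Finset (Fin n × Fin n)) (i : Fin n) : Finset (Fin n) :=
  Finset.univ.filter (fun j => (j, i) ∈ E)

/-- The set of successors of `i` in the digraph with edge set `E`. -/
def succs {n : ℕ} (E : Finset (Fin n × Fin n)) (i : Fin n) : Finset (Fin n) :=
  Finset.univ.filter (fun j => (i, j) ∈ E)

/-- `E` is the edge set of an OLF system: every edge runs from a vertex with no
predecessors (an opinion leader) to a vertex with no successors (a follower). -/
def IsOLF {n : ℕ} (E : Finset (Fin n × Fin n)) : Prop :=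
  ∀ e ∈ E, preds E e.1 = ∅ ∧ succs E e.2 = ∅

/-- One step of the unanimity rule: actor `i` adopts the common decision of its
predecessors (as recorded in `c`) if they are nonempty and unanimous, and keeps
its own initial decision `x i` otherwise. -/
def unanStep {n : ℕ} (E : Finset (Fin n × Fin n)) (x c : Fin n → Bool) (i : Fin n) : Bool :=
  if (preds E i).Nonempty ∧ ∀ j ∈ preds E i, c j = true then true
  else if (preds E i).Nonempty ∧ ∀ j ∈ preds E i, c j = false then false
  else x i

/-- The collective decision vector of an OLF system. -/
def olfVec {n : ℕ} (E : Finset (Fin n × Fin n)) (x : Fin n → Bool) : Fin n → Bool :=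
  unanStep E x x

/-- Simple majority over a decision vector. -/
def majority {n : ℕ} (c : Fin n → Bool) : Bool :=
  decide ((Finset.univ.filter (fun i => c i = true)).card >
          (Finset.univ.filter (fun i => c i = false)).card)

/-- The collective decision function of an OLF system. -/
def olfC {n : ℕ} (E : Finset (Fin n × Fin n)) (x : Fin n → Bool) : Bool :=
  majority (olfVec E x)

/-- The satisfaction score of actor `i` under a collective decision making model `C`. -/
def SAT {n : ℕ} (C : (Fin n → Bool) → Bool) (i : Fin n) : ℕ :=
  (Finset.univ.filter (fun x : Fin n → Bool => C x = x i)).card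


/-!
The satisfaction score satisfies all seven axioms, so it suffices that two scores `f`, `g`
satisfying them agree. Their difference `d = f - g` obeys the homogeneous axioms, and we show
`d = 0` on a system by strong induction on its edge set. A follower with a single leader gets
the same score as in the dictator system, where normalization and symmetry pin it down. A
follower `v` with two leaders `a₁, a₂`, and those leaders, are handled by deleting an edge into
`v` and comparing equal gain with horizontal neutrality. A leader whose only follower `b` has no
other leader is handled by opposite gain after deleting that edge. Finally the isolated actors
share one value of `d`, which normalization forces to be zero.
-/

section Graph

variable {n : ℕ} {E F : Finset (Fin n × Fin n)} {a b i j : Fin n}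

@[simp] lemma mem_preds : a ∈ preds E b ↔ (a, b) ∈ E := by simp [preds]

@[simp] lemma mem_succs : a ∈ succs E b ↔ (b, a) ∈ E := by simp [succs]

lemma preds_mono (h : F ⊆ E) (i : Fin n) : preds F i ⊆ preds E i :=
  fun _ ha => mem_preds.2 (h (mem_preds.1 ha))

lemma succs_mono (h : F ⊆ E) (i : Fin n) : succs F i ⊆ succs E i :=
  fun _ ha => mem_succs.2 (h (mem_succs.1 ha))

lemma preds_insert_self (E : Finset (Fin n × Fin n)) (i j : Fin n) :
    preds (insert (i, j) E) j = insert i (preds E j) := by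
  ext; simp

lemma preds_insert_of_ne (E : Finset (Fin n × Fin n)) (i : Fin n) {j k : Fin n} (hk : k ≠ j) :
    preds (insert (i, j) E) k = preds E k := by
  ext; simp [hk]

lemma preds_erase_self (E : Finset (Fin n × Fin n)) (i j : Fin n) :
    preds (E.erase (i, j)) j = (preds E j).erase i := by
  ext; simp [and_comm]

namespace IsOLF

lemma mono (hE : IsOLF E) (h : F ⊆ E) : IsOLF F := fun e he =>
  ⟨subset_empty.1 ((hE e (h he)).1 ▸ preds_mono h e.1),
    subset_empty.1 ((hE e (h he)).2 ▸ succs_mono h e.2)⟩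

lemma preds_eq_empty (hE : IsOLF E) (h : (a, b) ∈ E) : preds E a = ∅ := (hE _ h).1

lemma succs_eq_empty (hE : IsOLF E) (h : (a, b) ∈ E) : succs E b = ∅ := (hE _ h).2

lemma preds_eq_empty_of_subset (hE : IsOLF E) (hF : F ⊆ E) (h : (a, b) ∈ E) :
    preds F a = ∅ :=
  subset_empty.1 (hE.preds_eq_empty h ▸ preds_mono hF a)

lemma succs_eq_empty_of_subset (hE : IsOLF E) (hF : F ⊆ E) (h : (a, b) ∈ E) :
    succs F b = ∅ :=
  subset_empty.1 (hE.succs_eq_empty h ▸ succs_mono hF b)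

lemma ne_of_mem (hE : IsOLF E) (h : (a, b) ∈ E) : a ≠ b := by
  rintro rfl
  simpa [hE.preds_eq_empty h] using mem_preds.2 h

end IsOLF

end Graph

section Dictator

def dictE (n : ℕ) (z : Fin n) : Finset (Fin n × Fin n) :=
  univ.filter fun e => e.1 = z ∧ e.2 ≠ z

variable {n : ℕ} {E : Finset (Fin n × Fin n)} {z k : Fin n}

@[simp] lemma mem_dictE {e : Fin n × Fin n} : e ∈ dictE n z ↔ e.1 = z ∧ e.2 ≠ z := by
  simp [dictE]

lemma preds_dictE_self : preds (dictE n z) z = ∅ := by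
  ext; simp

lemma preds_dictE_of_ne (hk : k ≠ z) : preds (dictE n z) k = {z} := by
  ext; simp [hk]

lemma succs_dictE_self : succs (dictE n z) z = univ \ {z} := by
  ext; simp

lemma succs_dictE_of_ne (hk : k ≠ z) : succs (dictE n z) k = ∅ := by
  ext; simp [hk]

lemma isOLF_dictE : IsOLF (dictE n z) := fun _ he =>
  ⟨(mem_dictE.1 he).1 ▸ preds_dictE_self, succs_dictE_of_ne (mem_dictE.1 he).2⟩

lemma IsOLF.eq_dictE (hE : IsOLF E) (h : succs E z = univ \ {z}) : E = dictE n z := by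
  have hz : ∀ k, k ≠ z → (z, k) ∈ E := fun k hk => by
    simpa [hk] using Finset.ext_iff.1 h k
  ext ⟨a, b⟩
  constructor
  · intro hab
    have ha : a = z := by
      by_contra ha
      simpa [hE.preds_eq_empty hab] using mem_preds.2 (hz a ha)
    subst ha
    exact mem_dictE.2 ⟨rfl, (hE.ne_of_mem hab).symm⟩
  · rw [mem_dictE]
    rintro ⟨rfl, hb⟩
    exact hz b hb

end Dictator

section Unanimity

variable {n : ℕ} {E : Finset (Fin n × Fin n)} {a b i j k : Fin n} {x : Fin n → Bool}

lemma olfVec_of_preds_eq_empty (h : preds E j = ∅) (x : Fin n → Bool) : olfVec E x j = x j := by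
  simp [olfVec, unanStep, h]

lemma olfVec_of_preds_eq_singleton (h : preds E j = {a}) (x : Fin n → Bool) :
    olfVec E x j = x a := by
  cases hx : x a <;> simp [olfVec, unanStep, h, hx]

lemma olfVec_insert_of_ne (E : Finset (Fin n × Fin n)) (i : Fin n) (x : Fin n → Bool)
    (hk : k ≠ j) : olfVec (insert (i, j) E) x k = olfVec E x k := by
  simp only [olfVec, unanStep, preds_insert_of_ne E i hk]

lemma olfVec_insert_self_eq_or (hj : (preds E j).Nonempty) (x : Fin n → Bool) :
    olfVec (insert (i, j) E) x j = olfVec E x j ∨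
      (x i = x j ∧ ∀ p ∈ preds E j, x p = !x i) := by
  obtain ⟨p₀, hp₀⟩ := id hj
  simp only [olfVec, unanStep, preds_insert_self, insert_nonempty, true_and, forall_mem_insert, hj]
  by_cases hT : ∀ p ∈ preds E j, x p = true <;> by_cases hF : ∀ p ∈ preds E j, x p = false <;>
    cases hi : x i <;> cases hj : x j <;> simp_all

lemma olfC_insert_of_olfVec_eq (h : olfVec (insert (i, j) E) x j = olfVec E x j) :
    olfC (insert (i, j) E) x = olfC E x := by
  unfold olfC
  congr 1
  funext k
  by_cases hk : k = j
  · exact hk ▸ h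
  · exact olfVec_insert_of_ne E i x hk

lemma olfVec_update_of_ne (hb : succs E b = ∅) (hk : k ≠ b) (v : Bool) :
    olfVec E (Function.update x b v) k = olfVec E x k := by
  have hp : ∀ p ∈ preds E k, Function.update x b v p = x p := fun p hp =>
    Function.update_of_ne (by rintro rfl; simpa [hb] using mem_succs.2 (mem_preds.1 hp)) v x
  simp +contextual only [olfVec, unanStep, hp, Function.update_of_ne hk]

lemma olfVec_comp_perm (σ : Equiv.Perm (Fin n)) (hσ : ∀ a b, (σ a, σ b) ∈ E ↔ (a, b) ∈ E)
    (x : Fin n → Bool) : olfVec E (x ∘ σ) = olfVec E x ∘ σ := by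
  have hpreds : ∀ v, preds E (σ v) = (preds E v).map σ.toEmbedding := fun v => by
    ext q
    simpa using hσ (σ.symm q) v
  funext v
  simp only [olfVec, unanStep, Function.comp_apply, hpreds, map_nonempty, forall_mem_map,
    Equiv.coe_toEmbedding]

lemma majority_comp_perm (c : Fin n → Bool) (σ : Equiv.Perm (Fin n)) :
    majority (c ∘ σ) = majority c := by
  have hcard : ∀ b, #(univ.filter fun v => (c ∘ σ) v = b) = #(univ.filter fun v => c v = b) :=
    fun b => card_equiv σ (by simp)
  simp only [majority, hcard]

lemma olfC_comp_perm (σ : Equiv.Perm (Fin n)) (hσ : ∀ a b, (σ a, σ b) ∈ E ↔ (a, b) ∈ E)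
    (x : Fin n → Bool) : olfC E (x ∘ σ) = olfC E x := by
  rw [olfC, olfVec_comp_perm σ hσ, majority_comp_perm, olfC]

lemma swap_mem_iff (hs : succs E i = succs E j) (hp : preds E i = preds E j) (a b : Fin n) :
    (Equiv.swap i j a, Equiv.swap i j b) ∈ E ↔ (a, b) ∈ E := by
  have hfst : ∀ a c, (Equiv.swap i j a, c) ∈ E ↔ (a, c) ∈ E := fun a c => by
    have := Finset.ext_iff.1 hs c
    simp only [mem_succs] at this
    rw [Equiv.swap_apply_def]
    split_ifs <;> subst_vars <;> simp [this]
  have hsnd : ∀ c b, (c, Equiv.swap i j b) ∈ E ↔ (c, b) ∈ E := fun c b => by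
    have := Finset.ext_iff.1 hp c
    simp only [mem_preds] at this
    rw [Equiv.swap_apply_def]
    split_ifs <;> subst_vars <;> simp [this]
  rw [hfst, hsnd]

lemma olfC_dictE (hn : 0 < n) (z : Fin n) (x : Fin n → Bool) : olfC (dictE n z) x = x z := by
  have hvec : olfVec (dictE n z) x = fun _ => x z := by
    funext k
    by_cases hk : k = z
    · rw [hk, olfVec_of_preds_eq_empty preds_dictE_self]
    · rw [olfVec_of_preds_eq_singleton (preds_dictE_of_ne hk)]
  cases hz : x z <;> simp [olfC, majority, hvec, hz, hn]

end Unanimity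

section Satisfaction

variable {n : ℕ} {E : Finset (Fin n × Fin n)} {a b h i j : Fin n}

lemma SAT_eq_sum (C : (Fin n → Bool) → Bool) (i : Fin n) :
    SAT C i = ∑ x, if C x = x i then 1 else 0 := by
  rw [SAT, card_filter]

lemma ite_eq_add_ite_eq_not (c d : Bool) :
    ((if c = d then 1 else 0) + (if c = !d then 1 else 0) : ℕ) = 1 := by
  cases c <;> cases d <;> rfl

lemma sum_SAT (C : (Fin n → Bool) → Bool) :
    ∑ i, SAT C i = ∑ x : Fin n → Bool, #(univ.filter fun i => C x = x i) := by
  simp only [SAT, card_filter]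
  exact sum_comm

lemma SAT_add_SAT_not (C : (Fin n → Bool) → Bool) (i : Fin n) :
    SAT C i + SAT (fun x => !C x) i = 2 ^ n := by
  simp only [SAT_eq_sum, ← sum_add_distrib, Bool.not_eq_eq_eq_not, ite_eq_add_ite_eq_not,
    sum_const, card_univ, Fintype.card_fun, Fintype.card_bool, Fintype.card_fin, smul_eq_mul,
    mul_one]

/-- Flipping `x b` exchanges the profiles satisfying `b` under `C` and under `!C`. -/
lemma SAT_not_eq_of_update {C : (Fin n → Bool) → Bool}
    (hC : ∀ x v, C (Function.update x b v) = C x) : SAT (fun x => !C x) b = SAT C b := by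
  have hflip : Function.Involutive fun x : Fin n → Bool => Function.update x b (!x b) :=
    fun x => by simp
  exact card_equiv hflip.toPerm (fun x => by simp [hC, Bool.not_eq_eq_eq_not])

lemma two_mul_SAT_eq_of_update {C : (Fin n → Bool) → Bool}
    (hC : ∀ x v, C (Function.update x b v) = C x) : 2 * SAT C b = 2 ^ n := by
  rw [← SAT_add_SAT_not C b, SAT_not_eq_of_update hC, two_mul]

lemma two_mul_SAT_eq_of_card_preds_eq_one (hE : IsOLF E) (hb : #(preds E b) = 1) :
    2 * SAT (olfC E) b = 2 ^ n := by
  obtain ⟨a, ha⟩ := card_eq_one.1 hb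
  have hab : (a, b) ∈ E := mem_preds.1 (ha ▸ mem_singleton_self a)
  refine two_mul_SAT_eq_of_update fun x v => ?_
  unfold olfC
  congr 1
  funext k
  by_cases hk : k = b
  · subst hk
    rw [olfVec_of_preds_eq_singleton ha, olfVec_of_preds_eq_singleton ha,
      Function.update_of_ne (hE.ne_of_mem hab)]
  · exact olfVec_update_of_ne (hE.succs_eq_empty hab) hk v

lemma SAT_comp_perm (σ : Equiv.Perm (Fin n)) (hσ : ∀ a b, (σ a, σ b) ∈ E ↔ (a, b) ∈ E)
    (i : Fin n) : SAT (olfC E) (σ i) = SAT (olfC E) i :=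
  card_equiv (σ.symm.arrowCongr (Equiv.refl Bool)) fun x => by
    have hx : σ.symm.arrowCongr (Equiv.refl Bool) x = x ∘ σ := by ext; simp
    simp [hx, olfC_comp_perm σ hσ]

lemma SAT_eq_of_succs_eq_of_preds_eq (hs : succs E i = succs E j) (hp : preds E i = preds E j) :
    SAT (olfC E) i = SAT (olfC E) j := by
  rw [← SAT_comp_perm _ (swap_mem_iff hs hp) j, Equiv.swap_apply_right]

lemma SAT_eq_two_pow_of_succs_eq (hn : 0 < n) (hE : IsOLF E) (h : succs E i = univ \ {i}) :
    SAT (olfC E) i = 2 ^ n := by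
  simp [hE.eq_dictE h, SAT, olfC_dictE hn]

lemma SAT_insert_equal_gain (hj : (preds E j).Nonempty) :
    SAT (olfC (insert (i, j) E)) i + SAT (olfC E) j =
      SAT (olfC E) i + SAT (olfC (insert (i, j) E)) j := by
  simp only [SAT_eq_sum, ← sum_add_distrib]
  refine sum_congr rfl fun x _ => ?_
  rcases olfVec_insert_self_eq_or (i := i) hj x with heq | ⟨hij, -⟩
  · rw [olfC_insert_of_olfVec_eq heq]
  · rw [hij]; ring

lemma SAT_insert_horizontal (hj : (preds E j).Nonempty) (hh : h ∈ preds E j) :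
    SAT (olfC (insert (i, j) E)) i + SAT (olfC (insert (i, j) E)) h =
      SAT (olfC E) i + SAT (olfC E) h := by
  simp only [SAT_eq_sum, ← sum_add_distrib]
  refine sum_congr rfl fun x _ => ?_
  rcases olfVec_insert_self_eq_or (i := i) hj x with heq | ⟨-, hpreds⟩
  · rw [olfC_insert_of_olfVec_eq heq]
  · rw [hpreds h hh, ite_eq_add_ite_eq_not, ite_eq_add_ite_eq_not]

lemma SAT_insert_opposite_gain (hj : preds E j = ∅) :
    SAT (olfC (insert (i, j) E)) i + SAT (olfC (insert (i, j) E)) j =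
      SAT (olfC E) i + SAT (olfC E) j := by
  simp only [SAT_eq_sum, ← sum_add_distrib]
  refine sum_congr rfl fun x _ => ?_
  by_cases hij : x j = x i
  · have hvec : olfVec (insert (i, j) E) x j = olfVec E x j := by
      rw [olfVec_of_preds_eq_singleton (by rw [preds_insert_self, hj]; rfl),
        olfVec_of_preds_eq_empty hj, hij]
    rw [olfC_insert_of_olfVec_eq hvec]
  · rw [Bool.eq_not_of_ne hij, ite_eq_add_ite_eq_not, ite_eq_add_ite_eq_not]

end Satisfaction

structure OLFAxioms (f : (m : ℕ) → Finset (Fin m × Fin m) → Fin m → ℝ) : Prop where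
  symm : ∀ (m : ℕ), Odd m → ∀ E : Finset (Fin m × Fin m), IsOLF E →
    ∀ i j : Fin m, succs E i = succs E j → preds E i = preds E j →
    f m E i = f m E j
  dict : ∀ (m : ℕ), Odd m → ∀ E : Finset (Fin m × Fin m), IsOLF E →
    ∀ i : Fin m, succs E i = Finset.univ \ {i} → f m E i = 2 ^ m
  dicted : ∀ (m : ℕ), Odd m → ∀ E E' : Finset (Fin m × Fin m), IsOLF E → IsOLF E' →
    ∀ i : Fin m, (preds E i).card = 1 → (preds E' i).card = 1 →
    f m E i = f m E' i
  equal : ∀ (m : ℕ), Odd m → ∀ E : Finset (Fin m × Fin m), IsOLF E →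
    ∀ i j : Fin m, i ≠ j → preds E i = ∅ → (preds E j).Nonempty → succs E j = ∅ →
    IsOLF (insert (i, j) E) →
    f m (insert (i, j) E) i - f m E i = f m (insert (i, j) E) j - f m E j
  opp : ∀ (m : ℕ), Odd m → ∀ E : Finset (Fin m × Fin m), IsOLF E →
    ∀ i j : Fin m, i ≠ j → preds E i = ∅ → preds E j = ∅ → succs E j = ∅ →
    IsOLF (insert (i, j) E) →
    f m (insert (i, j) E) i - f m E i = f m E j - f m (insert (i, j) E) j
  horiz : ∀ (m : ℕ), Odd m → ∀ E : Finset (Fin m × Fin m), IsOLF E →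
    ∀ i j h : Fin m, i ≠ j → i ≠ h → j ≠ h →
    preds E i = ∅ → (preds E j).Nonempty → succs E j = ∅ →
    preds E h = ∅ → h ∈ preds E j →
    IsOLF (insert (i, j) E) →
    f m (insert (i, j) E) i - f m E i = f m E h - f m (insert (i, j) E) h
  norm : ∀ (m : ℕ), Odd m → ∀ E : Finset (Fin m × Fin m), IsOLF E →
    ∑ i : Fin m, f m E i =
      ∑ x : Fin m → Bool, ((Finset.univ.filter (fun i => olfC E x = x i)).card : ℝ)

theorem olfAxioms_SAT : OLFAxioms fun _ E i => (SAT (olfC E) i : ℝ) where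
  symm _ _ _ _ _ _ hs hp := congrArg _ (SAT_eq_of_succs_eq_of_preds_eq hs hp)
  dict m hm _ hE _ h := by exact_mod_cast SAT_eq_two_pow_of_succs_eq hm.pos hE h
  dicted _ _ _ _ hE hE' _ hi hi' := by
    have h := (two_mul_SAT_eq_of_card_preds_eq_one hE hi).trans
      (two_mul_SAT_eq_of_card_preds_eq_one hE' hi').symm
    exact_mod_cast Nat.eq_of_mul_eq_mul_left two_pos h
  equal _ _ _ _ i _ _ _ hj _ _ := by
    have := congrArg (Nat.cast (R := ℝ)) (SAT_insert_equal_gain (i := i) hj)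
    push_cast at this
    linarith
  opp _ _ _ _ i _ _ _ hj _ _ := by
    have := congrArg (Nat.cast (R := ℝ)) (SAT_insert_opposite_gain (i := i) hj)
    push_cast at this
    linarith
  horiz _ _ _ _ i _ _ _ _ _ _ hj _ _ hh _ := by
    have := congrArg (Nat.cast (R := ℝ)) (SAT_insert_horizontal (i := i) hj hh)
    push_cast at this
    linarith
  norm _ _ E _ := by exact_mod_cast sum_SAT (olfC E)

namespace OLFAxioms

variable {f g : (m : ℕ) → Finset (Fin m × Fin m) → Fin m → ℝ} {m : ℕ}
  {E : Finset (Fin m × Fin m)} {a b v : Fin m}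

lemma sum_dictE (hf : OLFAxioms f) (hm : Odd m) {z k : Fin m} (hk : k ≠ z) :
    ∑ i, f m (dictE m z) i = 2 ^ m + #(univ.erase z) * f m (dictE m z) k := by
  have hother : ∀ i ∈ univ.erase z, f m (dictE m z) i = f m (dictE m z) k := fun i hi =>
    hf.symm m hm _ isOLF_dictE i k
      (by rw [succs_dictE_of_ne (ne_of_mem_erase hi), succs_dictE_of_ne hk])
      (by rw [preds_dictE_of_ne (ne_of_mem_erase hi), preds_dictE_of_ne hk])
  rw [← add_sum_erase _ _ (mem_univ z), hf.dict m hm _ isOLF_dictE z succs_dictE_self,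
    sum_congr rfl hother, sum_const, nsmul_eq_mul]

lemma eq_of_card_preds_eq_one (hf : OLFAxioms f) (hg : OLFAxioms g) (hm : Odd m)
    (hE : IsOLF E) (hb : #(preds E b) = 1) : f m E b = g m E b := by
  obtain ⟨a, ha⟩ := card_eq_one.1 hb
  have hba : b ≠ a := (hE.ne_of_mem (mem_preds.1 (ha ▸ mem_singleton_self a))).symm
  have hD : #(preds (dictE m a) b) = 1 := by rw [preds_dictE_of_ne hba, card_singleton]
  rw [hf.dicted m hm _ _ hE isOLF_dictE b hb hD, hg.dicted m hm _ _ hE isOLF_dictE b hb hD]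
  have hsum := (hf.sum_dictE hm hba).symm.trans <|
    (hf.norm m hm _ isOLF_dictE).trans <| (hg.norm m hm _ isOLF_dictE).symm.trans <|
      hg.sum_dictE hm hba
  have hpos : (0 : ℝ) < #(univ.erase a) := by exact_mod_cast card_pos.2 ⟨b, by simpa using hba⟩
  exact mul_left_cancel₀ hpos.ne' (by linarith)

lemma equal_erase (hf : OLFAxioms f) (hm : Odd m) (hE : IsOLF E) (hav : (a, v) ∈ E)
    (hv : (preds (E.erase (a, v)) v).Nonempty) :
    f m E a - f m (E.erase (a, v)) a = f m E v - f m (E.erase (a, v)) v := by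
  simpa only [insert_erase hav] using hf.equal m hm _ (hE.mono (erase_subset _ _)) a v
    (hE.ne_of_mem hav) (hE.preds_eq_empty_of_subset (erase_subset _ _) hav) hv
    (hE.succs_eq_empty_of_subset (erase_subset _ _) hav) (by rwa [insert_erase hav])

lemma opp_erase (hf : OLFAxioms f) (hm : Odd m) (hE : IsOLF E) (hav : (a, v) ∈ E)
    (hv : preds (E.erase (a, v)) v = ∅) :
    f m E a - f m (E.erase (a, v)) a = f m (E.erase (a, v)) v - f m E v := by
  simpa only [insert_erase hav] using hf.opp m hm _ (hE.mono (erase_subset _ _)) a v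
    (hE.ne_of_mem hav) (hE.preds_eq_empty_of_subset (erase_subset _ _) hav) hv
    (hE.succs_eq_empty_of_subset (erase_subset _ _) hav) (by rwa [insert_erase hav])

lemma horiz_erase (hf : OLFAxioms f) (hm : Odd m) (hE : IsOLF E) (hav : (a, v) ∈ E)
    {h : Fin m} (hhv : (h, v) ∈ E) (hah : a ≠ h) :
    f m E a - f m (E.erase (a, v)) a = f m (E.erase (a, v)) h - f m E h := by
  have hh : h ∈ preds (E.erase (a, v)) v := by simp [hah.symm, hhv]
  simpa only [insert_erase hav] using hf.horiz m hm _ (hE.mono (erase_subset _ _)) a v h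
    (hE.ne_of_mem hav) hah (hE.ne_of_mem hhv).symm
    (hE.preds_eq_empty_of_subset (erase_subset _ _) hav) ⟨h, hh⟩
    (hE.succs_eq_empty_of_subset (erase_subset _ _) hav)
    (hE.preds_eq_empty_of_subset (erase_subset _ _) hhv) hh (by rwa [insert_erase hav])

/-- With `d := f - g`, removing either edge into `v` gives `d a₁ = d v = d a₂` by equal gain,
while horizontal neutrality gives `d a₁ = -d a₂`. -/
lemma eq_of_two_preds (hf : OLFAxioms f) (hg : OLFAxioms g) (hm : Odd m) (hE : IsOLF E)
    (IH : ∀ F ⊂ E, IsOLF F → ∀ i, f m F i = g m F i) {a₁ a₂ : Fin m} (h₁ : (a₁, v) ∈ E)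
    (h₂ : (a₂, v) ∈ E) (h₁₂ : a₁ ≠ a₂) : f m E v = g m E v ∧ f m E a₁ = g m E a₁ := by
  have hmem₁ : (a₂, v) ∈ E.erase (a₁, v) := by simp [h₁₂.symm, h₂]
  have hmem₂ : (a₁, v) ∈ E.erase (a₂, v) := by simp [h₁₂, h₁]
  have hIH₁ := IH _ (erase_ssubset h₁) (hE.mono (erase_subset _ _))
  have hIH₂ := IH _ (erase_ssubset h₂) (hE.mono (erase_subset _ _))
  have := hf.equal_erase hm hE h₁ ⟨a₂, mem_preds.2 hmem₁⟩
  have := hg.equal_erase hm hE h₁ ⟨a₂, mem_preds.2 hmem₁⟩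
  have := hf.equal_erase hm hE h₂ ⟨a₁, mem_preds.2 hmem₂⟩
  have := hg.equal_erase hm hE h₂ ⟨a₁, mem_preds.2 hmem₂⟩
  have := hf.horiz_erase hm hE h₁ h₂ h₁₂
  have := hg.horiz_erase hm hE h₁ h₂ h₁₂
  have := hIH₁ a₁; have := hIH₁ a₂; have := hIH₁ v; have := hIH₂ a₂; have := hIH₂ v
  constructor <;> linarith

lemma eq_of_preds_nonempty (hf : OLFAxioms f) (hg : OLFAxioms g) (hm : Odd m) (hE : IsOLF E)
    (IH : ∀ F ⊂ E, IsOLF F → ∀ i, f m F i = g m F i) (hv : (preds E v).Nonempty) :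
    f m E v = g m E v := by
  rcases (one_le_card.2 hv).eq_or_lt with h | h
  · exact eq_of_card_preds_eq_one hf hg hm hE h.symm
  · obtain ⟨a₁, h₁, a₂, h₂, h₁₂⟩ := one_lt_card.1 h
    exact (eq_of_two_preds hf hg hm hE IH (mem_preds.1 h₁) (mem_preds.1 h₂) h₁₂).1

lemma eq_of_succs_nonempty (hf : OLFAxioms f) (hg : OLFAxioms g) (hm : Odd m) (hE : IsOLF E)
    (IH : ∀ F ⊂ E, IsOLF F → ∀ i, f m F i = g m F i) (ha : (succs E a).Nonempty) :
    f m E a = g m E a := by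
  obtain ⟨b, hb⟩ := ha
  have hab := mem_succs.1 hb
  rcases (one_le_card.2 ⟨a, mem_preds.2 hab⟩).eq_or_lt with h | h
  · obtain ⟨c, hc⟩ := card_eq_one.1 h.symm
    have hac : a = c := by simpa [hc] using mem_preds.2 hab
    have hb' : preds (E.erase (a, b)) b = ∅ := by
      rw [preds_erase_self, hc, hac, erase_singleton]
    have := hf.opp_erase hm hE hab hb'
    have := hg.opp_erase hm hE hab hb'
    have := IH _ (erase_ssubset hab) (hE.mono (erase_subset _ _)) a
    have := IH _ (erase_ssubset hab) (hE.mono (erase_subset _ _)) b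
    have := eq_of_card_preds_eq_one hf hg hm hE h.symm
    linarith
  · obtain ⟨c, hc, hca⟩ := exists_mem_ne h a
    exact (eq_of_two_preds hf hg hm hE IH hab (mem_preds.1 hc) hca.symm).2

lemma eq_of_isolated (hf : OLFAxioms f) (hg : OLFAxioms g) (hm : Odd m) (hE : IsOLF E)
    (hrest : ∀ k, (preds E k).Nonempty ∨ (succs E k).Nonempty → f m E k = g m E k)
    (hp : preds E v = ∅) (hs : succs E v = ∅) : f m E v = g m E v := by
  set I := univ.filter fun k => preds E k = ∅ ∧ succs E k = ∅
  have hd : ∀ k, f m E k - g m E k = if k ∈ I then f m E v - g m E v else 0 := by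
    intro k
    split_ifs with hk
    · obtain ⟨hkp, hks⟩ := (mem_filter.1 hk).2
      rw [hf.symm m hm E hE k v (by rw [hks, hs]) (by rw [hkp, hp]),
        hg.symm m hm E hE k v (by rw [hks, hs]) (by rw [hkp, hp])]
    · have hk' : (preds E k).Nonempty ∨ (succs E k).Nonempty := by
        simpa only [I, mem_filter, mem_univ, true_and, not_and_or, nonempty_iff_ne_empty] using hk
      rw [hrest k hk', sub_self]
  have hsum : ∑ k, (f m E k - g m E k) = 0 := by
    rw [sum_sub_distrib, hf.norm m hm E hE, hg.norm m hm E hE, sub_self]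
  rw [sum_congr rfl fun k _ => hd k, sum_ite_mem, univ_inter, sum_const, nsmul_eq_mul] at hsum
  have hI : (#I : ℝ) ≠ 0 := by exact_mod_cast (card_pos.2 ⟨v, by simp [I, hp, hs]⟩).ne'
  exact sub_eq_zero.1 ((mul_eq_zero.1 hsum).resolve_left hI)

theorem unique (hf : OLFAxioms f) (hg : OLFAxioms g) (hm : Odd m) (hE : IsOLF E) (i : Fin m) :
    f m E i = g m E i := by
  induction E using Finset.strongInduction generalizing i with
  | H E IH =>
    have hrest : ∀ k, (preds E k).Nonempty ∨ (succs E k).Nonempty → f m E k = g m E k := by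
      rintro k (hk | hk)
      · exact eq_of_preds_nonempty hf hg hm hE IH hk
      · exact eq_of_succs_nonempty hf hg hm hE IH hk
    by_cases hi : (preds E i).Nonempty ∨ (succs E i).Nonempty
    · exact hrest i hi
    · simp only [not_or, not_nonempty_iff_eq_empty] at hi
      exact eq_of_isolated hf hg hm hE hrest hi.1 hi.2

end OLFAxioms

/-- Axiomatization of the satisfaction score for OLF systems: any map `f`
assigning a real-valued score to each actor of every OLF system on an odd
number of actors that satisfies symmetry, the dictator property, dictated
independence, the equal gain property, the opposite gain property, horizontal
neutrality and satisfaction normalization coincides with the satisfaction score. -/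
theorem olf_axiomatization
    (f : (m : ℕ) → Finset (Fin m × Fin m) → Fin m → ℝ)
    -- (1) symmetry
    (hsymm : ∀ (m : ℕ), Odd m → ∀ E : Finset (Fin m × Fin m), IsOLF E →
      ∀ i j : Fin m, succs E i = succs E j → preds E i = preds E j →
      f m E i = f m E j)
    -- (2) dictator property
    (hdict : ∀ (m : ℕ), Odd m → ∀ E : Finset (Fin m × Fin m), IsOLF E →
      ∀ i : Fin m, succs E i = Finset.univ \ {i} → f m E i = 2 ^ m)
    -- (3) dictated independence
    (hdicted : ∀ (m : ℕ), Odd m → ∀ E E' : Finset (Fin m × Fin m), IsOLF E → IsOLF E' →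
      ∀ i : Fin m, (preds E i).card = 1 → (preds E' i).card = 1 →
      f m E i = f m E' i)
    -- (4) equal gain property
    (hequal : ∀ (m : ℕ), Odd m → ∀ E : Finset (Fin m × Fin m), IsOLF E →
      ∀ i j : Fin m, i ≠ j → preds E i = ∅ → (preds E j).Nonempty → succs E j = ∅ →
      IsOLF (insert (i, j) E) →
      f m (insert (i, j) E) i - f m E i = f m (insert (i, j) E) j - f m E j)
    -- (5) opposite gain property
    (hopp : ∀ (m : ℕ), Odd m → ∀ E : Finset (Fin m × Fin m), IsOLF E →
      ∀ i j : Fin m, i ≠ j → preds E i = ∅ → preds E j = ∅ → succs E j = ∅ →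
      IsOLF (insert (i, j) E) →
      f m (insert (i, j) E) i - f m E i = f m E j - f m (insert (i, j) E) j)
    -- (6) horizontal neutrality
    (hhoriz : ∀ (m : ℕ), Odd m → ∀ E : Finset (Fin m × Fin m), IsOLF E →
      ∀ i j h : Fin m, i ≠ j → i ≠ h → j ≠ h →
      preds E i = ∅ → (preds E j).Nonempty → succs E j = ∅ →
      preds E h = ∅ → h ∈ preds E j →
      IsOLF (insert (i, j) E) →
      f m (insert (i, j) E) i - f m E i = f m E h - f m (insert (i, j) E) h)
    -- (7) satisfaction normalization
    (hnorm : ∀ (m : ℕ), Odd m → ∀ E : Finset (Fin m × Fin m), IsOLF E →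
      ∑ i : Fin m, f m E i =
        ∑ x : Fin m → Bool, ((Finset.univ.filter (fun i => olfC E x = x i)).card : ℝ)) :
    ∀ (m : ℕ), Odd m → ∀ E : Finset (Fin m × Fin m), IsOLF E →
      ∀ i : Fin m, f m E i = SAT (olfC E) i :=
  fun _ hm _ hE =>
    OLFAxioms.unique ⟨hsymm, hdict, hdicted, hequal, hopp, hhoriz, hnorm⟩ olfAxioms_SAT hm hE
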